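/- (Convergence of the Haar wavelet method for the four-point BVP.) Let n₁, n₂, v₁, v₂ ∈ (0,1) with n₁n₂v₁v₂ ≠ 1, and let y, z : [0,1] → ℝ be three times differentiable with |y'''(t)| ≤ ξ₁ and |z'''(t)| ≤ ξ₂ for all t ∈ [0,1]. Define the Haar coefficients a_{2^j+k+1} = 2^j ∫₀¹ y''(t) h_{2^j+k+1}(t) dt and b_{2^j+k+1} = 2^j ∫₀¹ z''(t) h_{2^j+k+1}(t) dt, and for an integer J ≥ 0 define the truncation error Ē_{M1}(t) = (n₁t/(1 − n₁n₂v₁v₂))·[ n₂v₁ Σ_{j>J} Σ_k a_{2^j+k+1}(p_{2,2^j+k+1}(v₂) − v₂p_{2,2^j+k+1}(1)) + Σ_{j>J} Σ_k b_{2^j+k+1}(p_{2,2^j+k+1}(v₁) − v₁p_{2,2^j+k+1}(1)) ] + Σ_{j>J} Σ_k a_{2^j+k+1}(p_{2,2^j+k+1}(t) − t·p_{2,2^j+k+1}(1)), where each sum over k runs from 0 to 2^j − 1. Then there exists a constant C̃ > 0, depending only on n₁, n₂, v₁, v₂, ξ₁, ξ₂, such that for all J ≥ 0 the L²([0,1])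 bound ‖Ē_{M1}‖₂ ≤ C̃·(2^{−(J+1)})² holds. -/

import Mathlib

/-!
A Haar coefficient of `f` at level `j` is `2^j ∫ (f(s) - f(s + d))` over the first half of the
support, `d = 2^{-(j+1)}`, so `|f'| ≤ ξ` makes it at most `ξ 2^j d² = ξ / 2^{j+2}`. The function
`p_{2,j,k}` vanishes left of the support, is a piecewise quadratic on it and equals `d²` to its
right, so `|p_{2,j,k}| ≤ d²`. Hence level `j` of each tail is `O((1 + |t|) ξ 4^{-j})`, the tail
over `j > J` is a geometric series of size `O(4^{-(J+1)})` uniformly in `t ∈ [0,1]`, and this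
pointwise bound on `[0,1]` bounds the `L²` norm.
-/

open MeasureTheory Real

/-- Left endpoint of the support of the Haar wavelet indexed by `(j, k)`. -/
noncomputable def eta1 (j k : ℕ) : ℝ := (k : ℝ) / 2 ^ j

/-- Midpoint of the support of the Haar wavelet indexed by `(j, k)`. -/
noncomputable def eta2 (j k : ℕ) : ℝ := (2 * (k : ℝ) + 1) / 2 ^ (j + 1)

/-- Right endpoint of the support of the Haar wavelet indexed by `(j, k)`. -/
noncomputable def eta3 (j k : ℕ) : ℝ := ((k : ℝ) + 1) / 2 ^ j

/-- The Haar wavelet `h_i` with `i = 2^j + k + 1`: equals `1` on `[η₁, η₂)`,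
`-1` on `[η₂, η₃)` and `0` elsewhere. -/
noncomputable def haarJK (j k : ℕ) (t : ℝ) : ℝ :=
  if eta1 j k ≤ t ∧ t < eta2 j k then 1
  else if eta2 j k ≤ t ∧ t < eta3 j k then -1
  else 0

/-- `p_{2,i}(t) = ∫₀ᵗ (t - s) h_i(s) ds` where `i = 2^j + k + 1`. -/
noncomputable def p2JK (j k : ℕ) (t : ℝ) : ℝ := ∫ s in (0:ℝ)..t, (t - s) * haarJK j k s

/-- The Haar coefficient `2^j ∫₀¹ f(t) h_{2^j+k+1}(t) dt` of a function `f`. -/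
noncomputable def haarCoeff (f : ℝ → ℝ) (j k : ℕ) : ℝ :=
  2 ^ j * ∫ t in (0:ℝ)..1, f t * haarJK j k t

/-- Truncation error of the Haar expansion at resolution `J`:
`Σ_{j=J+1}^∞ Σ_{k=0}^{2^j-1} c_{j,k} p_{2,2^j+k+1}(t)` (here the outer sum is
reindexed by `j = J + 1 + m`). -/
noncomputable def truncErr (c : ℕ → ℕ → ℝ) (J : ℕ) (t : ℝ) : ℝ :=
  ∑' m : ℕ, ∑ k ∈ Finset.range (2 ^ (J + 1 + m)), c (J + 1 + m) k * p2JK (J + 1 + m) k t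

/-- The `L²([0,1])` norm of a function. -/
noncomputable def L2norm (f : ℝ → ℝ) : ℝ := Real.sqrt (∫ t in (0:ℝ)..1, f t ^ 2)

/-- Truncation error `Ē_{M1}` of the Haar method for the four-point BVP, at
resolution `J`, built from the coefficient families `a` (of `y''`) and `b`
(of `z''`); the outer sums over `j > J` are reindexed by `j = J + 1 + m`. -/
noncomputable def truncErr4pt (n₁ n₂ v₁ v₂ : ℝ) (a b : ℕ → ℕ → ℝ) (J : ℕ) (t : ℝ) : ℝ :=
  n₁ * t / (1 - n₁ * n₂ * v₁ * v₂) *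
    (n₂ * v₁ * ∑' m : ℕ, ∑ k ∈ Finset.range (2 ^ (J + 1 + m)),
        a (J + 1 + m) k * (p2JK (J + 1 + m) k v₂ - v₂ * p2JK (J + 1 + m) k 1) +
      ∑' m : ℕ, ∑ k ∈ Finset.range (2 ^ (J + 1 + m)),
        b (J + 1 + m) k * (p2JK (J + 1 + m) k v₁ - v₁ * p2JK (J + 1 + m) k 1)) +
  ∑' m : ℕ, ∑ k ∈ Finset.range (2 ^ (J + 1 + m)),
    a (J + 1 + m) k * (p2JK (J + 1 + m) k t - t * p2JK (J + 1 + m) k 1)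

section Haar

variable (j k : ℕ)

lemma eta2_sub_eta1 : eta2 j k - eta1 j k = 1 / 2 ^ (j + 1) := by
  unfold eta1 eta2; rw [pow_succ]; field_simp; ring

lemma eta3_sub_eta2 : eta3 j k - eta2 j k = 1 / 2 ^ (j + 1) := by
  unfold eta3 eta2; rw [pow_succ]; field_simp; ring

lemma eta1_nonneg : 0 ≤ eta1 j k := by unfold eta1; positivity

lemma eta1_lt_eta2 : eta1 j k < eta2 j k := by
  rw [← sub_pos, eta2_sub_eta1]; positivity

lemma eta2_lt_eta3 : eta2 j k < eta3 j k := by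
  rw [← sub_pos, eta3_sub_eta2]; positivity

variable {j k} in
lemma eta3_le_one (hk : k < 2 ^ j) : eta3 j k ≤ 1 := by
  unfold eta3
  rw [div_le_one (by positivity)]
  exact_mod_cast hk

variable {j k} {s : ℝ}

lemma haarJK_eq_one (h₁ : eta1 j k ≤ s) (h₂ : s < eta2 j k) : haarJK j k s = 1 := by
  simp [haarJK, h₁, h₂]

lemma haarJK_eq_neg_one (h₁ : eta2 j k ≤ s) (h₂ : s < eta3 j k) : haarJK j k s = -1 := by
  simp [haarJK, not_lt.mpr h₁, h₁, h₂]

lemma haarJK_eq_zero_of_lt_eta1 (h : s < eta1 j k) : haarJK j k s = 0 := by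
  simp [haarJK, not_le.mpr h, not_le.mpr (h.trans (eta1_lt_eta2 j k))]

lemma haarJK_eq_zero_of_eta3_le (h : eta3 j k ≤ s) : haarJK j k s = 0 := by
  simp [haarJK, not_lt.mpr ((eta2_lt_eta3 j k).le.trans h), not_lt.mpr h]

variable (j k)

lemma abs_haarJK_le_one (s : ℝ) : |haarJK j k s| ≤ 1 := by
  unfold haarJK; split_ifs <;> simp

lemma measurable_haarJK : Measurable (haarJK j k) := by
  have hI : ∀ a b : ℝ, MeasurableSet {s : ℝ | a ≤ s ∧ s < b} := fun a b =>
    (measurableSet_le measurable_const measurable_id).inter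
      (measurableSet_lt measurable_id measurable_const)
  exact Measurable.ite (hI _ _) measurable_const
    (Measurable.ite (hI _ _) measurable_const measurable_const)

lemma intervalIntegrable_haarJK (a b : ℝ) : IntervalIntegrable (haarJK j k) volume a b := by
  rw [intervalIntegrable_iff]
  refine Integrable.mono' (g := fun _ => (1 : ℝ)) (integrableOn_const measure_Ioc_lt_top.ne)
    (measurable_haarJK j k).aestronglyMeasurable.restrict ?_
  filter_upwards with s using abs_haarJK_le_one j k s

end Haar

section P2JK

variable (j k : ℕ)

lemma intervalIntegrable_sub_mul_haarJK (t a b : ℝ) :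
    IntervalIntegrable (fun s => (t - s) * haarJK j k s) volume a b :=
  (intervalIntegrable_haarJK j k a b).continuousOn_mul (by fun_prop)

variable {j k}

lemma integral_sub_mul_haarJK_of_eqOn {t a b c : ℝ} (hab : a ≤ b)
    (hc : Set.EqOn (haarJK j k) (fun _ => c) (Set.Ioo a b)) :
    ∫ s in a..b, (t - s) * haarJK j k s = c * (t * (b - a) - (b ^ 2 - a ^ 2) / 2) := by
  rw [intervalIntegral.integral_congr_Ioo_of_le hab (g := fun s => (t - s) * c)
    fun s hs => by simp only [hc hs]]
  rw [intervalIntegral.integral_mul_const, intervalIntegral.integral_sub (by simp) (by simp)]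
  simp only [intervalIntegral.integral_const, integral_id, smul_eq_mul]
  ring

lemma p2JK_eq_zero_of_le_eta1 {t : ℝ} (ht : t ≤ eta1 j k) : p2JK j k t = 0 := by
  rw [p2JK, intervalIntegral.integral_congr_uIoo (g := fun _ => 0), intervalIntegral.integral_zero]
  intro s hs
  have : s < eta1 j k := hs.2.trans_le (max_le (eta1_nonneg j k) ht)
  simp [haarJK_eq_zero_of_lt_eta1 this]

variable (j k)

lemma abs_p2JK_le (t : ℝ) : |p2JK j k t| ≤ (1 / 2 ^ (j + 1)) ^ 2 := by
  set η₁ := eta1 j k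
  set η₂ := eta2 j k
  set η₃ := eta3 j k
  set d : ℝ := 1 / 2 ^ (j + 1)
  have h₁₂ : η₂ - η₁ = d := eta2_sub_eta1 j k
  have h₂₃ : η₃ - η₂ = d := eta3_sub_eta2 j k
  have hd : 0 < d := by positivity
  have hη₁ : 0 ≤ η₁ := eta1_nonneg j k
  have hI := intervalIntegrable_sub_mul_haarJK j k t
  have zero_on : Set.EqOn (haarJK j k) (fun _ => 0) (Set.Ioo 0 η₁) :=
    fun s hs => haarJK_eq_zero_of_lt_eta1 hs.2
  rcases le_or_gt t η₁ with h₁ | h₁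
  · rw [p2JK_eq_zero_of_le_eta1 h₁, abs_zero]; positivity
  rw [p2JK, ← intervalIntegral.integral_add_adjacent_intervals (hI 0 η₁) (hI η₁ t),
    integral_sub_mul_haarJK_of_eqOn hη₁ zero_on, zero_mul, zero_add]
  rcases le_or_gt t η₂ with h₂ | h₂
  · rw [integral_sub_mul_haarJK_of_eqOn h₁.le fun s hs => haarJK_eq_one hs.1.le (hs.2.trans_le h₂),
      abs_le]
    constructor <;> nlinarith
  rw [← intervalIntegral.integral_add_adjacent_intervals (hI η₁ η₂) (hI η₂ t),
    integral_sub_mul_haarJK_of_eqOn (by linarith) fun s hs => haarJK_eq_one hs.1.le hs.2]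
  rcases le_or_gt t η₃ with h₃ | h₃
  · rw [integral_sub_mul_haarJK_of_eqOn h₂.le
      fun s hs => haarJK_eq_neg_one hs.1.le (hs.2.trans_le h₃), abs_le]
    constructor <;> nlinarith
  rw [← intervalIntegral.integral_add_adjacent_intervals (hI η₂ η₃) (hI η₃ t),
    integral_sub_mul_haarJK_of_eqOn (by linarith) fun s hs => haarJK_eq_neg_one hs.1.le hs.2,
    integral_sub_mul_haarJK_of_eqOn h₃.le fun s hs => haarJK_eq_zero_of_eta3_le hs.1.le, abs_le]
  constructor <;> nlinarith

end P2JK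

section HaarCoeff

variable {f : ℝ → ℝ} {j k : ℕ}

lemma integral_mul_haarJK_eq (hf : Continuous f) (hk : k < 2 ^ j) :
    ∫ s in (0 : ℝ)..1, f s * haarJK j k s =
      ∫ s in eta1 j k..eta2 j k, (f s - f (s + 1 / 2 ^ (j + 1))) := by
  set η₁ := eta1 j k
  set η₂ := eta2 j k
  set η₃ := eta3 j k
  set d : ℝ := 1 / 2 ^ (j + 1)
  have h₁₂ : η₂ - η₁ = d := eta2_sub_eta1 j k
  have h₂₃ : η₃ - η₂ = d := eta3_sub_eta2 j k
  have hd : 0 < d := by positivity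
  have hI : ∀ a b : ℝ, IntervalIntegrable (fun s => f s * haarJK j k s) volume a b :=
    fun a b => (intervalIntegrable_haarJK j k a b).continuousOn_mul hf.continuousOn
  have left : ∫ s in (0 : ℝ)..η₁, f s * haarJK j k s = 0 := by
    rw [intervalIntegral.integral_congr_Ioo_of_le (eta1_nonneg j k) (g := fun _ => 0)
      fun s hs => by simp [haarJK_eq_zero_of_lt_eta1 hs.2]]
    simp
  have right : ∫ s in η₃..1, f s * haarJK j k s = 0 := by
    rw [intervalIntegral.integral_congr_Ioo_of_le (eta3_le_one hk) (g := fun _ => 0)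
      fun s hs => by simp [haarJK_eq_zero_of_eta3_le hs.1.le]]
    simp
  have plus : ∫ s in η₁..η₂, f s * haarJK j k s = ∫ s in η₁..η₂, f s :=
    intervalIntegral.integral_congr_Ioo_of_le (by linarith)
      fun s hs => by simp [haarJK_eq_one hs.1.le hs.2]
  have minus : ∫ s in η₂..η₃, f s * haarJK j k s = -∫ s in η₁..η₂, f (s + d) := by
    rw [intervalIntegral.integral_comp_add_right, ← intervalIntegral.integral_neg,
      show η₁ + d = η₂ by linarith, show η₂ + d = η₃ by linarith]
    exact intervalIntegral.integral_congr_Ioo_of_le (by linarith)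
      fun s hs => by simp [haarJK_eq_neg_one hs.1.le hs.2]
  rw [← intervalIntegral.integral_add_adjacent_intervals (hI 0 η₁) (hI η₁ 1),
    ← intervalIntegral.integral_add_adjacent_intervals (hI η₁ η₂) (hI η₂ 1),
    ← intervalIntegral.integral_add_adjacent_intervals (hI η₂ η₃) (hI η₃ 1),
    left, right, plus, minus, intervalIntegral.integral_sub (hf.intervalIntegrable _ _)
      ((by fun_prop : Continuous fun s => f (s + d)).intervalIntegrable _ _)]
  ring

lemma abs_haarCoeff_le {ξ : ℝ} (hf : Differentiable ℝ f)
    (hf' : ∀ t ∈ Set.Icc (0 : ℝ) 1, |deriv f t| ≤ ξ) (hk : k < 2 ^ j) :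
    |haarCoeff f j k| ≤ ξ / 2 ^ (j + 2) := by
  set d : ℝ := 1 / 2 ^ (j + 1)
  have hd : 0 < d := by positivity
  have h₁₂ : eta2 j k - eta1 j k = d := eta2_sub_eta1 j k
  have shift_bound : ∀ s ∈ Set.uIoc (eta1 j k) (eta2 j k), ‖f s - f (s + d)‖ ≤ ξ * d := by
    intro s hs
    rw [Set.uIoc_of_le (eta1_lt_eta2 j k).le] at hs
    have h₁ := eta1_nonneg j k
    have h₂₃ := eta3_sub_eta2 j k
    have h₃ := eta3_le_one hk
    have hmvt := Convex.norm_image_sub_le_of_norm_deriv_le (fun x _ => hf x) hf' (convex_Icc 0 1)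
      (⟨by linarith [hs.1], by linarith [hs.2]⟩ : s ∈ Set.Icc (0 : ℝ) 1)
      (⟨by linarith [hs.1], by linarith [hs.2]⟩ : s + d ∈ Set.Icc (0 : ℝ) 1)
    rwa [norm_sub_rev, add_sub_cancel_left, Real.norm_of_nonneg hd.le] at hmvt
  have hint := intervalIntegral.norm_integral_le_of_norm_le_const shift_bound
  rw [h₁₂, abs_of_pos hd, ← integral_mul_haarJK_eq hf.continuous hk, Real.norm_eq_abs] at hint
  rw [haarCoeff, abs_mul, abs_of_pos (by positivity)]
  calc (2 : ℝ) ^ j * |∫ s in (0 : ℝ)..1, f s * haarJK j k s| ≤ 2 ^ j * (ξ * d * d) := by gcongr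
    _ = ξ / 2 ^ (j + 2) := by simp only [d]; field_simp; ring

end HaarCoeff

section HaarTail

noncomputable def haarTail (c : ℕ → ℕ → ℝ) (J : ℕ) (t : ℝ) : ℝ :=
  ∑' m : ℕ, ∑ k ∈ Finset.range (2 ^ (J + 1 + m)),
    c (J + 1 + m) k * (p2JK (J + 1 + m) k t - t * p2JK (J + 1 + m) k 1)

variable {c : ℕ → ℕ → ℝ} {ξ : ℝ}

lemma abs_sum_mul_p2JK_sub_le {j : ℕ} (hc : ∀ k < 2 ^ j, |c j k| ≤ ξ / 2 ^ (j + 2)) (t : ℝ) :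
    |∑ k ∈ Finset.range (2 ^ j), c j k * (p2JK j k t - t * p2JK j k 1)| ≤
      ξ * (1 + |t|) / 4 * (1 / 2 ^ (j + 1)) ^ 2 := by
  set d : ℝ := 1 / 2 ^ (j + 1)
  have hp : ∀ k, |p2JK j k t - t * p2JK j k 1| ≤ (1 + |t|) * d ^ 2 := fun k =>
    calc |p2JK j k t - t * p2JK j k 1| ≤ |p2JK j k t| + |t| * |p2JK j k 1| := by
          rw [← abs_mul]; exact abs_sub (p2JK j k t) (t * p2JK j k 1)
      _ ≤ d ^ 2 + |t| * d ^ 2 := by gcongr <;> exact abs_p2JK_le j k _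
      _ = (1 + |t|) * d ^ 2 := by ring
  calc |∑ k ∈ Finset.range (2 ^ j), c j k * (p2JK j k t - t * p2JK j k 1)|
      ≤ ∑ k ∈ Finset.range (2 ^ j), |c j k| * |p2JK j k t - t * p2JK j k 1| := by
        simpa only [abs_mul] using Finset.abs_sum_le_sum_abs
          (fun k => c j k * (p2JK j k t - t * p2JK j k 1)) (Finset.range (2 ^ j))
    _ ≤ ∑ _k ∈ Finset.range (2 ^ j), ξ / 2 ^ (j + 2) * ((1 + |t|) * d ^ 2) := by
        refine Finset.sum_le_sum fun k hk => ?_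
        have hck := hc k (Finset.mem_range.mp hk)
        exact mul_le_mul hck (hp k) (abs_nonneg _) ((abs_nonneg _).trans hck)
    _ = ξ * (1 + |t|) / 4 * d ^ 2 := by
        rw [Finset.sum_const, Finset.card_range, nsmul_eq_mul]
        push_cast
        field_simp
        ring

lemma abs_haarTail_le (hc : ∀ j, ∀ k < 2 ^ j, |c j k| ≤ ξ / 2 ^ (j + 2)) (J : ℕ) (t : ℝ) :
    |haarTail c J t| ≤ ξ / 12 * (1 / 2 ^ (J + 1)) ^ 2 * (1 + |t|) := by
  set a := ξ * (1 + |t|) / 16 * (1 / 2 ^ (J + 1)) ^ 2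
  have hgeom : HasSum (fun m : ℕ => a * (1 / 4) ^ m) (a * (1 - 1 / 4)⁻¹) :=
    (hasSum_geometric_of_lt_one (by norm_num) (by norm_num)).mul_left a
  have hlevel : ∀ m : ℕ, ‖∑ k ∈ Finset.range (2 ^ (J + 1 + m)),
      c (J + 1 + m) k * (p2JK (J + 1 + m) k t - t * p2JK (J + 1 + m) k 1)‖ ≤ a * (1 / 4) ^ m := by
    intro m
    refine (abs_sum_mul_p2JK_sub_le (hc (J + 1 + m)) t).trans_eq ?_
    simp only [a]
    rw [show (1 / 4 : ℝ) ^ m = 1 / (2 ^ m) ^ 2 by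
      rw [one_div_pow, ← pow_mul, mul_comm, pow_mul]; norm_num]
    field_simp
    ring
  have := tsum_of_norm_bounded hgeom hlevel
  rw [Real.norm_eq_abs] at this
  refine this.trans_eq ?_
  simp only [a]
  ring

end HaarTail

lemma L2norm_le_of_abs_le {f : ℝ → ℝ} {B : ℝ} (hB : 0 ≤ B)
    (hf : ∀ t ∈ Set.Icc (0 : ℝ) 1, |f t| ≤ B) : L2norm f ≤ B := by
  have hsq : ∀ t ∈ Set.uIoc (0 : ℝ) 1, ‖f t ^ 2‖ ≤ B ^ 2 := fun t ht => by
    rw [Set.uIoc_of_le zero_le_one] at ht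
    simpa [sq_abs] using pow_le_pow_left₀ (abs_nonneg _) (hf t (Set.Ioc_subset_Icc_self ht)) 2
  have hint := intervalIntegral.norm_integral_le_of_norm_le_const hsq
  rw [sub_zero, abs_one, mul_one, Real.norm_eq_abs] at hint
  exact Real.sqrt_le_iff.mpr ⟨hB, (le_abs_self _).trans hint⟩

lemma abs_truncErr4pt_le {n₁ n₂ v₁ v₂ α β : ℝ} {a b : ℕ → ℕ → ℝ} {J : ℕ}
    (ha : ∀ t, |haarTail a J t| ≤ α * (1 + |t|)) (hb : ∀ t, |haarTail b J t| ≤ β * (1 + |t|))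
    {t : ℝ} (ht : t ∈ Set.Icc (0 : ℝ) 1) :
    |truncErr4pt n₁ n₂ v₁ v₂ a b J t| ≤
      |n₁| / |1 - n₁ * n₂ * v₁ * v₂| * (|n₂ * v₁| * (α * (1 + |v₂|)) + β * (1 + |v₁|)) +
        α * 2 := by
  have hfactor : |n₁ * t / (1 - n₁ * n₂ * v₁ * v₂)| ≤ |n₁| / |1 - n₁ * n₂ * v₁ * v₂| := by
    rw [abs_div, abs_mul]
    gcongr
    exact mul_le_of_le_one_right (abs_nonneg _) (abs_le.mpr ⟨by linarith [ht.1], ht.2⟩)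
  have hα : 0 ≤ α := nonneg_of_mul_nonneg_left ((abs_nonneg _).trans (ha 0)) (by positivity)
  have ht' : 1 + |t| ≤ 2 := by rw [abs_of_nonneg ht.1]; linarith [ht.2]
  change |n₁ * t / (1 - n₁ * n₂ * v₁ * v₂) * (n₂ * v₁ * haarTail a J v₂ + haarTail b J v₁) +
      haarTail a J t| ≤ _
  calc _ ≤ |n₁ * t / (1 - n₁ * n₂ * v₁ * v₂)| * (|n₂ * v₁| * |haarTail a J v₂| +
          |haarTail b J v₁|) + |haarTail a J t| := by
        refine (abs_add_le _ _).trans ?_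
        rw [abs_mul, ← abs_mul (n₂ * v₁)]
        gcongr
        exact abs_add_le _ _
    _ ≤ _ := by
        gcongr
        · exact ha v₂
        · exact hb v₁
        · exact (ha t).trans (by gcongr)

theorem haar_four_point_truncation_bound_general (n₁ n₂ v₁ v₂ ξ₁ ξ₂ : ℝ) :
    ∃ C > 0, ∀ y z : ℝ → ℝ,
      Differentiable ℝ y → Differentiable ℝ (deriv y) →
        Differentiable ℝ (deriv (deriv y)) →
      Differentiable ℝ z → Differentiable ℝ (deriv z) →
        Differentiable ℝ (deriv (deriv z)) →
      (∀ t ∈ Set.Icc (0:ℝ) 1, |deriv (deriv (deriv y)) t| ≤ ξ₁) →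
      (∀ t ∈ Set.Icc (0:ℝ) 1, |deriv (deriv (deriv z)) t| ≤ ξ₂) →
      ∀ J : ℕ,
        L2norm (truncErr4pt n₁ n₂ v₁ v₂
            (haarCoeff (deriv (deriv y))) (haarCoeff (deriv (deriv z))) J) ≤
          C * (1 / 2 ^ (J + 1)) ^ 2 := by
  refine ⟨(|n₁| / |1 - n₁ * n₂ * v₁ * v₂| * (|n₂ * v₁| * (|ξ₁| * (1 + |v₂|)) + |ξ₂| * (1 + |v₁|)) +
      |ξ₁| * 2) / 12 + 1, by positivity, fun y z _ _ hy _ _ hz hy' hz' J => ?_⟩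
  have tail_bound {f : ℝ → ℝ} {ξ : ℝ} (hf : Differentiable ℝ f)
      (hf' : ∀ t ∈ Set.Icc (0 : ℝ) 1, |deriv f t| ≤ ξ) (t : ℝ) :
      |haarTail (haarCoeff f) J t| ≤ |ξ| / 12 * (1 / 2 ^ (J + 1)) ^ 2 * (1 + |t|) :=
    (abs_haarTail_le (fun j k hk => abs_haarCoeff_le hf hf' hk) J t).trans
      (by gcongr; exact le_abs_self ξ)
  have hq : (0 : ℝ) ≤ (1 / 2 ^ (J + 1)) ^ 2 := by positivity
  refine L2norm_le_of_abs_le (by positivity) fun t ht =>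
    (abs_truncErr4pt_le (tail_bound hy hy') (tail_bound hz hz') ht).trans ?_
  rw [add_mul, one_mul]
  exact le_add_of_le_of_nonneg (le_of_eq (by ring)) hq

/-- Convergence of the Haar wavelet method for the four-point
BVP: there is a constant `C̃ > 0`, depending only on `n₁, n₂, v₁, v₂, ξ₁, ξ₂`,
such that `‖Ē_{M1}‖₂ ≤ C̃·(2^{-(J+1)})²` for all `J ≥ 0`. -/
theorem haar_four_point_truncation_bound (n₁ n₂ v₁ v₂ ξ₁ ξ₂ : ℝ)
    (hn₁ : n₁ ∈ Set.Ioo (0:ℝ) 1) (hn₂ : n₂ ∈ Set.Ioo (0:ℝ) 1)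
    (hv₁ : v₁ ∈ Set.Ioo (0:ℝ) 1) (hv₂ : v₂ ∈ Set.Ioo (0:ℝ) 1)
    (hne : n₁ * n₂ * v₁ * v₂ ≠ 1) :
    ∃ C > 0, ∀ y z : ℝ → ℝ,
      Differentiable ℝ y → Differentiable ℝ (deriv y) →
        Differentiable ℝ (deriv (deriv y)) →
      Differentiable ℝ z → Differentiable ℝ (deriv z) →
        Differentiable ℝ (deriv (deriv z)) →
      (∀ t ∈ Set.Icc (0:ℝ) 1, |deriv (deriv (deriv y)) t| ≤ ξ₁) →
      (∀ t ∈ Set.Icc (0:ℝ) 1, |deriv (deriv (deriv z)) t| ≤ ξ₂) →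
      ∀ J : ℕ,
        L2norm (truncErr4pt n₁ n₂ v₁ v₂
            (haarCoeff (deriv (deriv y))) (haarCoeff (deriv (deriv z))) J) ≤
          C * (1 / 2 ^ (J + 1)) ^ 2 :=
  haar_four_point_truncation_bound_general n₁ n₂ v₁ v₂ ξ₁ ξ₂
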